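/- arXiv:math/0408045 — 2 statements merged into one kernel-verified Lean document; each statement's English description precedes it below -/
import Mathlib

section
/- In a finite double groupoid, if L, M, N are boxes such that L|M (horizontally composable) and L over N (vertically composable), then ⌜(L) = ⌝(M), ⌞(L) = ⌟(M), ⌜(L) = ⌞(N), and ⌝(L) = ⌟(N). -/
/-- A (finite) groupoid, presented algebraically: a set `A` of arrows over a base `P`,
with source `s`, target `e`, identities, a (total, junk-valued when undefined)
composition, and inverses. Composition is written left to right: `comp a b` is
defined when `e a = s b`. -/
structure Gpd (P : Type) (A : Type) where
  s : A → P
  e : A → P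
  id : P → A
  comp : A → A → A
  inv : A → A
  s_id : ∀ p, s (id p) = p
  e_id : ∀ p, e (id p) = p
  s_comp : ∀ a b, e a = s b → s (comp a b) = s a
  e_comp : ∀ a b, e a = s b → e (comp a b) = e b
  id_comp : ∀ a, comp (id (s a)) a = a
  comp_id : ∀ a, comp a (id (e a)) = a
  comp_assoc : ∀ a b c, e a = s b → e b = s c →
    comp (comp a b) c = comp a (comp b c)
  s_inv : ∀ a, s (inv a) = e a
  e_inv : ∀ a, e (inv a) = s a
  inv_comp : ∀ a, comp (inv a) a = id (e a)
  comp_inv : ∀ a, comp a (inv a) = id (s a)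

/-- A finite double groupoid: boxes `B`, horizontal arrows `H`, vertical arrows `V`,
points `P`; boxes carry a horizontal groupoid structure over `V`
(source = left side, target = right side) and a vertical groupoid structure over `H`
(source = top side, target = bottom side), compatible with the side groupoids,
satisfying the interchange law. -/
structure DoubleGroupoid where
  P : Type
  H : Type
  V : Type
  B : Type
  [fP : Fintype P]
  [fH : Fintype H]
  [fV : Fintype V]
  [fB : Fintype B]
  [dP : DecidableEq P]
  [dH : DecidableEq H]
  [dV : DecidableEq V]
  [dB : DecidableEq B]
  /-- horizontal arrows: source `s` = left point, target `e` = right point -/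
  gH : Gpd P H
  /-- vertical arrows: source `s` = top point, target `e` = bottom point -/
  gV : Gpd P V
  /-- horizontal composition of boxes; base `V`, source = left side, target = right side -/
  gBh : Gpd V B
  /-- vertical composition of boxes; base `H`, source = top side, target = bottom side -/
  gBv : Gpd H B
  corner_tl : ∀ A, gH.s (gBv.s A) = gV.s (gBh.s A)
  corner_tr : ∀ A, gH.e (gBv.s A) = gV.s (gBh.e A)
  corner_bl : ∀ A, gH.s (gBv.e A) = gV.e (gBh.s A)
  corner_br : ∀ A, gH.e (gBv.e A) = gV.e (gBh.e A)
  t_hcomp : ∀ A B, gBh.e A = gBh.s B →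
    gBv.s (gBh.comp A B) = gH.comp (gBv.s A) (gBv.s B)
  b_hcomp : ∀ A B, gBh.e A = gBh.s B →
    gBv.e (gBh.comp A B) = gH.comp (gBv.e A) (gBv.e B)
  l_vcomp : ∀ A B, gBv.e A = gBv.s B →
    gBh.s (gBv.comp A B) = gV.comp (gBh.s A) (gBh.s B)
  r_vcomp : ∀ A B, gBv.e A = gBv.s B →
    gBh.e (gBv.comp A B) = gV.comp (gBh.e A) (gBh.e B)
  t_idh : ∀ g, gBv.s (gBh.id g) = gH.id (gV.s g)
  b_idh : ∀ g, gBv.e (gBh.id g) = gH.id (gV.e g)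
  l_idv : ∀ x, gBh.s (gBv.id x) = gV.id (gH.s x)
  r_idv : ∀ x, gBh.e (gBv.id x) = gV.id (gH.e x)
  t_hinv : ∀ A, gBv.s (gBh.inv A) = gH.inv (gBv.s A)
  b_hinv : ∀ A, gBv.e (gBh.inv A) = gH.inv (gBv.e A)
  l_vinv : ∀ A, gBh.s (gBv.inv A) = gV.inv (gBh.s A)
  r_vinv : ∀ A, gBh.e (gBv.inv A) = gV.inv (gBh.e A)
  hinv_vinv : ∀ A, gBh.inv (gBv.inv A) = gBv.inv (gBh.inv A)
  idh_vcomp : ∀ g h, gV.e g = gV.s h →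
    gBv.comp (gBh.id g) (gBh.id h) = gBh.id (gV.comp g h)
  idv_hcomp : ∀ x y, gH.e x = gH.s y →
    gBh.comp (gBv.id x) (gBv.id y) = gBv.id (gH.comp x y)
  id_id : ∀ p, gBh.id (gV.id p) = gBv.id (gH.id p)
  interchange : ∀ A B C D,
    gBh.e A = gBh.s B → gBh.e C = gBh.s D →
    gBv.e A = gBv.s C → gBv.e B = gBv.s D →
    gBv.comp (gBh.comp A B) (gBh.comp C D) =
      gBh.comp (gBv.comp A C) (gBv.comp B D)

namespace DoubleGroupoid

instance (T : DoubleGroupoid) : Fintype T.P := T.fP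
instance (T : DoubleGroupoid) : Fintype T.H := T.fH
instance (T : DoubleGroupoid) : Fintype T.V := T.fV
instance (T : DoubleGroupoid) : Fintype T.B := T.fB
instance (T : DoubleGroupoid) : DecidableEq T.P := T.dP
instance (T : DoubleGroupoid) : DecidableEq T.H := T.dH
instance (T : DoubleGroupoid) : DecidableEq T.V := T.dV
instance (T : DoubleGroupoid) : DecidableEq T.B := T.dB

variable (T : DoubleGroupoid)

/-- top side of a box -/
def top (A : T.B) : T.H := T.gBv.s A
/-- bottom side of a box -/
def bot (A : T.B) : T.H := T.gBv.e A
/-- left side of a box -/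
def left (A : T.B) : T.V := T.gBh.s A
/-- right side of a box -/
def right (A : T.B) : T.V := T.gBh.e A

/-- horizontal composition -/
def hcomp (A B : T.B) : T.B := T.gBh.comp A B
/-- vertical composition ("A over B") -/
def vcomp (A B : T.B) : T.B := T.gBv.comp A B
/-- horizontal inverse -/
def hinv (A : T.B) : T.B := T.gBh.inv A
/-- vertical inverse -/
def vinv (A : T.B) : T.B := T.gBv.inv A
/-- total inverse `A⁻¹ = (Aʰ)ᵛ` -/
def tinv (A : T.B) : T.B := T.gBv.inv (T.gBh.inv A)

/-- top-left vertex -/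
def tl (A : T.B) : T.P := T.gH.s (T.top A)
/-- top-right vertex -/
def tr (A : T.B) : T.P := T.gH.e (T.top A)
/-- bottom-left vertex -/
def bl (A : T.B) : T.P := T.gH.s (T.bot A)
/-- bottom-right vertex -/
def br (A : T.B) : T.P := T.gH.e (T.bot A)
/-- right-top vertex (equal to `tr` by the corner compatibilities) -/
def rt (A : T.B) : T.P := T.gV.s (T.right A)
/-- right-bottom vertex -/
def rb (A : T.B) : T.P := T.gV.e (T.right A)
/-- left-top vertex -/
def lt (A : T.B) : T.P := T.gV.s (T.left A)
/-- left-bottom vertex -/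
def lb (A : T.B) : T.P := T.gV.e (T.left A)

/-- upper-left corner function: number of boxes with the same left and top sides -/
noncomputable def ulc (A : T.B) : ℕ :=
  Nat.card {U : T.B // T.left U = T.left A ∧ T.top U = T.top A}
/-- upper-right corner function: number of boxes with the same right and top sides -/
noncomputable def urc (A : T.B) : ℕ :=
  Nat.card {U : T.B // T.right U = T.right A ∧ T.top U = T.top A}
/-- lower-left corner function: number of boxes with the same left and bottom sides -/
noncomputable def llc (A : T.B) : ℕ :=
  Nat.card {U : T.B // T.left U = T.left A ∧ T.bot U = T.bot A}
/-- lower-right corner function: number of boxes with the same right and bottom sides -/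
noncomputable def lrc (A : T.B) : ℕ :=
  Nat.card {U : T.B // T.right U = T.right A ∧ T.bot U = T.bot A}

/-- the double identity box `Θ_P` at a point -/
def thetaBox (p : T.P) : T.B := T.gBv.id (T.gH.id p)

/-- the filling condition: every compatible pair (right side, top side) bounds a box -/
def Filling : Prop :=
  ∀ (g : T.V) (x : T.H), T.gH.e x = T.gV.s g →
    ∃ A : T.B, T.top A = x ∧ T.right A = g

/-- membership in the core groupoid `D`: the left and bottom sides are identities -/
def isCoreD (D : T.B) : Prop :=
  T.left D = T.gV.id (T.gV.s (T.left D)) ∧ T.bot D = T.gH.id (T.gH.s (T.bot D))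

/-- membership in the core groupoid `E`: the right and top sides are identities -/
def isCoreE (E : T.B) : Prop :=
  T.right E = T.gV.id (T.gV.s (T.right E)) ∧ T.top E = T.gH.id (T.gH.s (T.top E))

/-- `θ(p)`: the number of boxes whose left and bottom sides are identities at `p` -/
noncomputable def thetaLB (p : T.P) : ℕ :=
  Nat.card {U : T.B // T.left U = T.gV.id p ∧ T.bot U = T.gH.id p}

end DoubleGroupoid

namespace Gpd

variable {P A : Type} (G : Gpd P A)

lemma comp_id' (a : A) (p : P) (h : G.e a = p) : G.comp a (G.id p) = a := by
  subst h; exact G.comp_id a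

lemma id_comp' (a : A) (p : P) (h : G.s a = p) : G.comp (G.id p) a = a := by
  subst h; exact G.id_comp a

lemma inv_cancel_left (a b : A) (h : G.e a = G.s b) :
    G.comp (G.inv a) (G.comp a b) = b := by
  rw [← G.comp_assoc _ _ _ (G.e_inv a) h, G.inv_comp]
  exact G.id_comp' b _ h.symm

lemma comp_inv_cancel_right (a b : A) (h : G.e a = G.s b) :
    G.comp (G.comp a b) (G.inv b) = a := by
  rw [G.comp_assoc _ _ _ h (G.s_inv b).symm, G.comp_inv]
  exact G.comp_id' a _ h

lemma comp_inv_cancel_left (a c : A) (h : G.s a = G.s c) :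
    G.comp a (G.comp (G.inv a) c) = c := by
  rw [← G.comp_assoc _ _ _ (G.s_inv a).symm (by rw [G.e_inv, h]), G.comp_inv]
  exact G.id_comp' c _ h.symm

lemma comp_inv_comp (a b : A) (h : G.e a = G.e b) :
    G.comp (G.comp a (G.inv b)) b = a := by
  rw [G.comp_assoc _ _ _ (by rw [G.s_inv, h]) (G.e_inv b), G.inv_comp]
  exact G.comp_id' a _ h

lemma inv_inv (a : A) : G.inv (G.inv a) = a := by
  have h := G.inv_cancel_left (G.inv a) a (G.e_inv a)
  rwa [G.inv_comp, G.comp_id' _ _ (by rw [G.e_inv, G.s_inv])] at h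

lemma inv_eq (a x : A) (h : G.e a = G.s x) (hx : G.comp a x = G.id (G.s a)) :
    x = G.inv a := by
  have h2 := G.inv_cancel_left a x h
  rw [hx, G.comp_id' _ _ (G.e_inv a)] at h2
  exact h2.symm

lemma inv_comp_eq (a b : A) (h : G.e a = G.s b) :
    G.inv (G.comp a b) = G.comp (G.inv b) (G.inv a) := by
  refine (G.inv_eq _ _ ?_ ?_).symm
  · rw [G.e_comp _ _ h, G.s_comp _ _ (by rw [G.e_inv, G.s_inv, h]), G.s_inv]
  · rw [← G.comp_assoc _ _ _ (by rw [G.e_comp _ _ h, G.s_inv])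
        (by rw [G.e_inv, G.s_inv, h]),
      G.comp_inv_cancel_right a b h, G.comp_inv, G.s_comp _ _ h]

end Gpd

/-- Generic cardinality lemma: translating a corner along a composition. -/
lemma card_side {V B H P : Type} (G : Gpd V B) (Gh : Gpd P H) (f : B → H)
    (hfc : ∀ X Y, G.e X = G.s Y → f (G.comp X Y) = Gh.comp (f X) (f Y))
    (hfi : ∀ X, f (G.inv X) = Gh.inv (f X))
    (L M : B) (hLM : G.e L = G.s M) (hf : Gh.e (f L) = Gh.s (f M)) :
    Nat.card {U : B // G.s U = G.s L ∧ f U = f L}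
      = Nat.card {U : B // G.e U = G.e M ∧ f U = f M} := by
  apply Nat.card_congr
  have hsK : G.s (G.comp L M) = G.s L := G.s_comp L M hLM
  have heK : G.e (G.comp L M) = G.e M := G.e_comp L M hLM
  have hfK : f (G.comp L M) = Gh.comp (f L) (f M) := hfc L M hLM
  set K := G.comp L M with hK
  have hcU : ∀ U : {U : B // G.s U = G.s L ∧ f U = f L},
      G.e (G.inv U.1) = G.s K := by
    intro U; rw [G.e_inv, U.2.1, hsK]
  have hcV : ∀ V : {U : B // G.e U = G.e M ∧ f U = f M},
      G.e V.1 = G.s (G.inv K) := by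
    intro V; rw [G.s_inv, heK]; exact V.2.1
  refine ⟨fun U => ⟨G.comp (G.inv U.1) K, ?_, ?_⟩,
          fun V => ⟨G.inv (G.comp V.1 (G.inv K)), ?_, ?_⟩, ?_, ?_⟩
  · rw [G.e_comp _ _ (hcU U), heK]
  · rw [hfc _ _ (hcU U), hfi, U.2.2, hfK, Gh.inv_cancel_left _ _ hf]
  · rw [G.s_inv, G.e_comp _ _ (hcV V), G.e_inv, hsK]
  · rw [hfi, hfc _ _ (hcV V), hfi, V.2.2, hfK, Gh.inv_comp_eq _ _ hf,
      Gh.comp_inv_cancel_left _ _ (by rw [Gh.s_inv]; exact hf.symm), Gh.inv_inv]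
  · intro U
    apply Subtype.ext
    show G.inv (G.comp (G.comp (G.inv U.1) K) (G.inv K)) = U.1
    rw [G.comp_inv_cancel_right _ _ (hcU U), G.inv_inv]
  · intro V
    apply Subtype.ext
    show G.comp (G.inv (G.inv (G.comp V.1 (G.inv K)))) K = V.1
    rw [G.inv_inv, G.comp_inv_comp _ _ (by rw [heK]; exact V.2.1)]

/-- symmetry of the corner functions: if `L|M` and `L` over `N`, then
`⌜(L) = ⌝(M)`, `⌞(L) = ⌟(M)`, `⌜(L) = ⌞(N)`, `⌝(L) = ⌟(N)`. -/
theorem stmt3 (T : DoubleGroupoid) (L M N : T.B)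
    (hLM : T.right L = T.left M) (hLN : T.bot L = T.top N) :
    T.ulc L = T.urc M ∧ T.llc L = T.lrc M ∧
    T.ulc L = T.llc N ∧ T.urc L = T.lrc N := by
  refine ⟨?_, ?_, ?_, ?_⟩
  · exact card_side T.gBh T.gH T.gBv.s T.t_hcomp T.t_hinv L M hLM
      (by rw [T.corner_tr, T.corner_tl]; exact congrArg T.gV.s hLM)
  · exact card_side T.gBh T.gH T.gBv.e T.b_hcomp T.b_hinv L M hLM
      (by rw [T.corner_br, T.corner_bl]; exact congrArg T.gV.e hLM)
  · have h := card_side T.gBv T.gV T.gBh.s T.l_vcomp T.l_vinv L N hLN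
      (by rw [← T.corner_bl, ← T.corner_tl]; exact congrArg T.gH.s hLN)
    calc T.ulc L
        = Nat.card {U : T.B // T.top U = T.top L ∧ T.left U = T.left L} :=
          Nat.card_congr (Equiv.subtypeEquivRight fun _ => and_comm)
      _ = Nat.card {U : T.B // T.bot U = T.bot N ∧ T.left U = T.left N} := h
      _ = T.llc N := Nat.card_congr (Equiv.subtypeEquivRight fun _ => and_comm)
  · have h := card_side T.gBv T.gV T.gBh.e T.r_vcomp T.r_vinv L N hLN
      (by rw [← T.corner_br, ← T.corner_tr]; exact congrArg T.gH.e hLN)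
    calc T.urc L
        = Nat.card {U : T.B // T.top U = T.top L ∧ T.right U = T.right L} :=
          Nat.card_congr (Equiv.subtypeEquivRight fun _ => and_comm)
      _ = Nat.card {U : T.B // T.bot U = T.bot N ∧ T.right U = T.right N} := h
      _ = T.lrc N := Nat.card_congr (Equiv.subtypeEquivRight fun _ => and_comm)
end

section
/- Let T be a finite double groupoid. The set D of boxes whose left and bottom sides are identities forms a groupoid over the base P, with source s(D) = rt(D), target e(D) = lt(D), identity P ↦ Θ_P (the box with all four sides identities at P), and composition D ◇ L given by the interchange composite of the 2×2 array with id^v t(L), D in the top row and L, id^v r(L) in the bottom row (defined when e(D) = s(L)). The inverse of D is ((id^v t(D))^{-1} D)^v. -/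
namespace DoubleGroupoid
variable (T : DoubleGroupoid)

/-- the core composition `D ◇ L`: the interchange composite of the 2×2 array with
top row `(id^v t(L), D)` and bottom row `(L, id^h r(L))`. -/
def diamond (D L : T.B) : T.B :=
  T.vcomp (T.hcomp (T.gBv.id (T.top L)) D) (T.hcomp L (T.gBh.id (T.right L)))

/-- the core inverse `D^{[-1]} = ((id^v t(D))⁻¹ ⋅ D)ᵛ`. -/
def coreInv (D : T.B) : T.B :=
  T.vinv (T.hcomp (T.gBv.id (T.gH.inv (T.top D))) D)

end DoubleGroupoid

namespace Gpd
variable {P A : Type} (G : Gpd P A)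

theorem inv_id (p : P) : G.inv (G.id p) = G.id p := by
  have h := G.comp_id (G.inv (G.id p))
  rw [G.e_inv, G.s_id] at h
  have h2 := G.inv_comp (G.id p)
  rw [G.e_id] at h2
  exact h.symm.trans h2

theorem inv_unique (a b : A) (hab : G.e a = G.s b) (h : G.comp a b = G.id (G.s a)) :
    b = G.inv a := by
  have h1 : G.comp (G.inv a) (G.comp a b) = G.comp (G.inv a) (G.id (G.s a)) := by rw [h]
  rw [← G.comp_assoc _ _ _ (by rw [G.e_inv]) hab, G.inv_comp] at h1
  have h3 : G.comp (G.id (G.e a)) b = b := by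
    rw [hab]; exact G.id_comp b
  have h2 : G.comp (G.inv a) (G.id (G.s a)) = G.inv a := by
    have := G.comp_id (G.inv a); rwa [G.e_inv] at this
  rw [h3, h2] at h1
  exact h1

theorem id_comp_id (p : P) : G.comp (G.id p) (G.id p) = G.id p := by
  have := G.id_comp (G.id p); rwa [G.s_id] at this

end Gpd

namespace DoubleGroupoid
variable (T : DoubleGroupoid)

/-- vertical inverse of a horizontal composite -/
theorem vinv_hcomp (A B : T.B) (h : T.gBh.e A = T.gBh.s B) :
    T.gBv.inv (T.gBh.comp A B) = T.gBh.comp (T.gBv.inv A) (T.gBv.inv B) := by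
  have hinv : T.gBh.e (T.gBv.inv A) = T.gBh.s (T.gBv.inv B) := by
    rw [T.r_vinv, T.l_vinv, h]
  have htt : T.gH.e (T.gBv.s A) = T.gH.s (T.gBv.s B) := by
    rw [T.corner_tr, T.corner_tl, h]
  symm
  apply T.gBv.inv_unique
  · rw [T.b_hcomp _ _ h, T.t_hcomp _ _ hinv, T.gBv.s_inv, T.gBv.s_inv]
  · rw [T.interchange _ _ _ _ h hinv (T.gBv.s_inv A).symm (T.gBv.s_inv B).symm,
      T.gBv.comp_inv, T.gBv.comp_inv, T.idv_hcomp _ _ htt, T.t_hcomp _ _ h]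

section Core
variable {T}

theorem core_left {D : T.B} (h : T.isCoreD D) : T.gBh.s D = T.gV.id (T.lt D) := h.1

theorem core_tls {D : T.B} (_h : T.isCoreD D) : T.gH.s (T.gBv.s D) = T.lt D :=
  T.corner_tl D

theorem core_tes {D : T.B} (_h : T.isCoreD D) : T.gH.e (T.gBv.s D) = T.rt D :=
  T.corner_tr D

theorem core_bot {D : T.B} (h : T.isCoreD D) : T.gBv.e D = T.gH.id (T.lt D) := by
  have hbl : T.gH.s (T.gBv.e D) = T.lt D := by
    rw [T.corner_bl]
    show T.gV.e (T.gBh.s D) = _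
    rw [core_left h, T.gV.e_id]
  have := h.2
  rwa [show T.gH.s (T.bot D) = T.lt D from hbl] at this

theorem core_re {D : T.B} (h : T.isCoreD D) : T.gV.e (T.gBh.e D) = T.lt D := by
  rw [← T.corner_br]
  show T.gH.e (T.gBv.e D) = _
  rw [core_bot h, T.gH.e_id]

/-- composability of the top row of the diamond -/
theorem diamond_c1 {D L : T.B} (hD : T.isCoreD D) (hL : T.isCoreD L)
    (h : T.lt D = T.rt L) :
    T.gBh.e (T.gBv.id (T.gBv.s L)) = T.gBh.s D := by
  rw [T.r_idv, core_tes hL, ← h, core_left hD]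

/-- composability of the bottom row of the diamond -/
theorem diamond_c2 (L : T.B) :
    T.gBh.e L = T.gBh.s (T.gBh.id (T.gBh.e L)) := (T.gBh.s_id _).symm

theorem botrow_top {L : T.B} (hL : T.isCoreD L) :
    T.gBv.s (T.gBh.comp L (T.gBh.id (T.gBh.e L))) = T.gBv.s L := by
  rw [T.t_hcomp _ _ (diamond_c2 L), T.t_idh]
  show T.gH.comp (T.gBv.s L) (T.gH.id (T.rt L)) = _
  rw [← core_tes hL, T.gH.comp_id]

theorem botrow_bot {L : T.B} (hL : T.isCoreD L) :
    T.gBv.e (T.gBh.comp L (T.gBh.id (T.gBh.e L))) = T.gH.id (T.lt L) := by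
  rw [T.b_hcomp _ _ (diamond_c2 L), T.b_idh, core_re hL, core_bot hL, Gpd.id_comp_id]

theorem toprow_bot {D L : T.B} (hD : T.isCoreD D) (hL : T.isCoreD L)
    (h : T.lt D = T.rt L) :
    T.gBv.e (T.gBh.comp (T.gBv.id (T.gBv.s L)) D) = T.gBv.s L := by
  rw [T.b_hcomp _ _ (diamond_c1 hD hL h), T.gBv.e_id, core_bot hD, h, ← core_tes hL,
    T.gH.comp_id]

/-- vertical composability of the two rows of the diamond -/
theorem diamond_c3 {D L : T.B} (hD : T.isCoreD D) (hL : T.isCoreD L)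
    (h : T.lt D = T.rt L) :
    T.gBv.e (T.gBh.comp (T.gBv.id (T.gBv.s L)) D) =
      T.gBv.s (T.gBh.comp L (T.gBh.id (T.gBh.e L))) := by
  rw [toprow_bot hD hL h, botrow_top hL]

theorem diamond_def (D L : T.B) :
    T.diamond D L = T.gBv.comp (T.gBh.comp (T.gBv.id (T.gBv.s L)) D)
      (T.gBh.comp L (T.gBh.id (T.gBh.e L))) := rfl

theorem diamond_top {D L : T.B} (hD : T.isCoreD D) (hL : T.isCoreD L)
    (h : T.lt D = T.rt L) :
    T.gBv.s (T.diamond D L) = T.gH.comp (T.gBv.s L) (T.gBv.s D) := by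
  rw [diamond_def, T.gBv.s_comp _ _ (diamond_c3 hD hL h),
    T.t_hcomp _ _ (diamond_c1 hD hL h), T.gBv.s_id]

theorem diamond_bot {D L : T.B} (hD : T.isCoreD D) (hL : T.isCoreD L)
    (h : T.lt D = T.rt L) :
    T.gBv.e (T.diamond D L) = T.gH.id (T.lt L) := by
  rw [diamond_def, T.gBv.e_comp _ _ (diamond_c3 hD hL h), botrow_bot hL]

theorem diamond_left {D L : T.B} (hD : T.isCoreD D) (hL : T.isCoreD L)
    (h : T.lt D = T.rt L) :
    T.gBh.s (T.diamond D L) = T.gV.id (T.lt L) := by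
  rw [diamond_def, T.l_vcomp _ _ (diamond_c3 hD hL h),
    T.gBh.s_comp _ _ (diamond_c1 hD hL h), T.gBh.s_comp _ _ (diamond_c2 L),
    T.l_idv, core_tls hL, core_left hL]
  exact Gpd.id_comp_id _ _

theorem diamond_right {D L : T.B} (hD : T.isCoreD D) (hL : T.isCoreD L)
    (h : T.lt D = T.rt L) :
    T.gBh.e (T.diamond D L) = T.gV.comp (T.gBh.e D) (T.gBh.e L) := by
  rw [diamond_def, T.r_vcomp _ _ (diamond_c3 hD hL h),
    T.gBh.e_comp _ _ (diamond_c1 hD hL h), T.gBh.e_comp _ _ (diamond_c2 L),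
    T.gBh.e_id]

theorem theta_def (p : T.P) : T.thetaBox p = T.gBv.id (T.gH.id p) := rfl

theorem theta_core (p : T.P) : T.isCoreD (T.thetaBox p) := by
  have hl : T.left (T.thetaBox p) = T.gV.id p := by
    show T.gBh.s (T.gBv.id (T.gH.id p)) = _
    rw [T.l_idv, T.gH.s_id]
  have hb : T.bot (T.thetaBox p) = T.gH.id p := by
    show T.gBv.e (T.gBv.id (T.gH.id p)) = _
    rw [T.gBv.e_id]
  constructor
  · show T.left (T.thetaBox p) = _
    rw [hl, T.gV.s_id]
  · show T.bot (T.thetaBox p) = _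
    rw [hb, T.gH.s_id]

theorem theta_rt (p : T.P) : T.rt (T.thetaBox p) = p := by
  show T.gV.s (T.gBh.e (T.gBv.id (T.gH.id p))) = p
  rw [T.r_idv, T.gH.e_id, T.gV.s_id]

theorem theta_lt (p : T.P) : T.lt (T.thetaBox p) = p := by
  show T.gV.s (T.gBh.s (T.gBv.id (T.gH.id p))) = p
  rw [T.l_idv, T.gH.s_id, T.gV.s_id]

theorem diamond_closure {D L : T.B} (hD : T.isCoreD D) (hL : T.isCoreD L)
    (h : T.lt D = T.rt L) :
    T.isCoreD (T.diamond D L) ∧ T.rt (T.diamond D L) = T.rt D ∧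
      T.lt (T.diamond D L) = T.lt L := by
  refine ⟨⟨?_, ?_⟩, ?_, ?_⟩
  · show T.gBh.s (T.diamond D L) = T.gV.id (T.gV.s (T.gBh.s (T.diamond D L)))
    rw [diamond_left hD hL h, T.gV.s_id]
  · show T.gBv.e (T.diamond D L) = T.gH.id (T.gH.s (T.gBv.e (T.diamond D L)))
    rw [diamond_bot hD hL h, T.gH.s_id]
  · show T.gV.s (T.gBh.e (T.diamond D L)) = T.gV.s (T.gBh.e D)
    rw [diamond_right hD hL h, T.gV.s_comp _ _
      (show T.gV.e (T.gBh.e D) = T.gV.s (T.gBh.e L) from (core_re hD).trans h)]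
  · show T.gV.s (T.gBh.s (T.diamond D L)) = T.gV.s (T.gBh.s L)
    rw [diamond_left hD hL h, T.gV.s_id, core_left hL, T.gV.s_id]

theorem diamond_theta_left {D : T.B} (hD : T.isCoreD D) :
    T.diamond (T.thetaBox (T.rt D)) D = D := by
  rw [diamond_def]
  have h1 : T.gBh.comp (T.gBv.id (T.gBv.s D)) (T.thetaBox (T.rt D)) =
      T.gBv.id (T.gBv.s D) := by
    have hth : T.thetaBox (T.rt D) = T.gBh.id (T.gBh.e (T.gBv.id (T.gBv.s D))) := by
      rw [T.r_idv, core_tes hD, theta_def, T.id_id]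
    rw [hth, T.gBh.comp_id]
  rw [h1, T.gBh.comp_id, T.gBv.id_comp]

theorem diamond_theta_right {D : T.B} (hD : T.isCoreD D) :
    T.diamond D (T.thetaBox (T.lt D)) = D := by
  rw [diamond_def]
  have hs : T.gBv.s (T.thetaBox (T.lt D)) = T.gH.id (T.lt D) := T.gBv.s_id _
  have h1 : T.gBh.comp (T.gBv.id (T.gBv.s (T.thetaBox (T.lt D)))) D = D := by
    rw [hs, ← T.id_id, ← core_left hD, T.gBh.id_comp]
  have h2 : T.gBh.comp (T.thetaBox (T.lt D))
      (T.gBh.id (T.gBh.e (T.thetaBox (T.lt D)))) = T.thetaBox (T.lt D) :=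
    T.gBh.comp_id _
  rw [h1, h2, theta_def, ← core_bot hD, T.gBv.comp_id]

theorem diamond_assoc {D L M : T.B} (hD : T.isCoreD D) (hL : T.isCoreD L)
    (hM : T.isCoreD M) (hDL : T.lt D = T.rt L) (hLM : T.lt L = T.rt M) :
    T.diamond (T.diamond D L) M = T.diamond D (T.diamond L M) := by
  have hzy : T.gH.e (T.gBv.s M) = T.gH.s (T.gBv.s L) := by
    rw [core_tes hM, core_tls hL, hLM]
  have cIzIy : T.gBh.e (T.gBv.id (T.gBv.s M)) = T.gBh.s (T.gBv.id (T.gBv.s L)) := by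
    rw [T.r_idv, T.l_idv, hzy]
  have cIyD := diamond_c1 hD hL hDL
  have cIzL := diamond_c1 hL hM hLM
  have cIzU1 : T.gBh.e (T.gBv.id (T.gBv.s M)) =
      T.gBh.s (T.gBh.comp (T.gBv.id (T.gBv.s L)) D) := by
    rw [T.gBh.s_comp _ _ cIyD]; exact cIzIy
  have cIzU2 : T.gBh.e (T.gBv.id (T.gBv.s M)) =
      T.gBh.s (T.gBh.comp L (T.gBh.id (T.gBh.e L))) := by
    rw [T.gBh.s_comp _ _ (diamond_c2 L)]; exact cIzL
  have cU1U2 := diamond_c3 hD hL hDL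
  have step1 : T.gBh.comp (T.gBv.id (T.gBv.s M)) (T.diamond D L) =
      T.gBv.comp
        (T.gBh.comp (T.gBv.id (T.gBv.s M)) (T.gBh.comp (T.gBv.id (T.gBv.s L)) D))
        (T.gBh.comp (T.gBv.id (T.gBv.s M)) (T.gBh.comp L (T.gBh.id (T.gBh.e L)))) := by
    conv_lhs => rw [(Gpd.id_comp_id T.gBv (T.gBv.s M)).symm, diamond_def]
    exact (T.interchange _ _ _ _ cIzU1 cIzU2
      (by rw [T.gBv.e_id, T.gBv.s_id]) cU1U2).symm
  have hA1A2 : T.gBv.e (T.gBh.comp (T.gBv.id (T.gBv.s M))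
        (T.gBh.comp (T.gBv.id (T.gBv.s L)) D)) =
      T.gBv.s (T.gBh.comp (T.gBv.id (T.gBv.s M))
        (T.gBh.comp L (T.gBh.id (T.gBh.e L)))) := by
    rw [T.b_hcomp _ _ cIzU1, T.t_hcomp _ _ cIzU2, T.gBv.e_id, T.gBv.s_id, cU1U2]
  have hA2A3 : T.gBv.e (T.gBh.comp (T.gBv.id (T.gBv.s M))
        (T.gBh.comp L (T.gBh.id (T.gBh.e L)))) =
      T.gBv.s (T.gBh.comp M (T.gBh.id (T.gBh.e M))) := by
    rw [T.b_hcomp _ _ cIzU2, T.gBv.e_id, botrow_bot hL, botrow_top hM, hLM,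
      ← core_tes hM, T.gH.comp_id]
  have stepR1 : T.gBh.comp (T.gBv.id (T.gBv.s (T.diamond L M))) D =
      T.gBh.comp (T.gBv.id (T.gBv.s M)) (T.gBh.comp (T.gBv.id (T.gBv.s L)) D) := by
    rw [diamond_top hL hM hLM, ← T.idv_hcomp _ _ hzy,
      T.gBh.comp_assoc _ _ _ cIzIy cIyD]
  have hJJ : T.gBh.comp (T.gBh.id (T.gBh.e M)) (T.gBh.id (T.gBh.e M)) =
      T.gBh.id (T.gBh.e M) := by
    have h := T.gBh.id_comp (T.gBh.id (T.gBh.e M))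
    rwa [T.gBh.s_id] at h
  have stepR2 : T.gBh.comp (T.diamond L M) (T.gBh.id (T.gBh.e (T.diamond L M))) =
      T.gBv.comp
        (T.gBh.comp (T.gBv.id (T.gBv.s M)) (T.gBh.comp L (T.gBh.id (T.gBh.e L))))
        (T.gBh.comp M (T.gBh.id (T.gBh.e M))) := by
    have hJsplit : T.gBh.id (T.gBh.e (T.diamond L M)) =
        T.gBv.comp (T.gBh.id (T.gBh.e L)) (T.gBh.id (T.gBh.e M)) := by
      rw [diamond_right hL hM hLM, ← T.idh_vcomp _ _
        (show T.gV.e (T.gBh.e L) = T.gV.s (T.gBh.e M) from (core_re hL).trans hLM)]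
    rw [hJsplit, diamond_def,
      ← T.interchange (T.gBh.comp (T.gBv.id (T.gBv.s M)) L) (T.gBh.id (T.gBh.e L))
        (T.gBh.comp M (T.gBh.id (T.gBh.e M))) (T.gBh.id (T.gBh.e M))
        (by rw [T.gBh.e_comp _ _ cIzL, T.gBh.s_id])
        (by rw [T.gBh.e_comp _ _ (diamond_c2 M), T.gBh.e_id, T.gBh.s_id])
        (diamond_c3 hL hM hLM)
        (show T.gBv.e (T.gBh.id (T.gBh.e L)) = T.gBv.s (T.gBh.id (T.gBh.e M)) by
          rw [T.b_idh, T.t_idh, core_re hL, hLM]; rfl),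
      T.gBh.comp_assoc _ _ _ cIzL (diamond_c2 L),
      T.gBh.comp_assoc _ _ _ (diamond_c2 M) (by rw [T.gBh.e_id, T.gBh.s_id]),
      hJJ]
  rw [diamond_def (T.diamond D L) M, step1, T.gBv.comp_assoc _ _ _ hA1A2 hA2A3,
    diamond_def D (T.diamond L M), stepR1, stepR2]

theorem coreInv_def' (D : T.B) : T.coreInv D =
    T.gBv.inv (T.gBh.comp (T.gBv.id (T.gH.inv (T.gBv.s D))) D) := rfl

theorem coreInv_cC {D : T.B} (hD : T.isCoreD D) :
    T.gBh.e (T.gBv.id (T.gH.inv (T.gBv.s D))) = T.gBh.s D := by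
  rw [T.r_idv, T.gH.e_inv, core_tls hD, core_left hD]

theorem coreInv_split {D : T.B} (hD : T.isCoreD D) :
    T.coreInv D = T.gBh.comp (T.gBv.id (T.gH.inv (T.gBv.s D))) (T.gBv.inv D) := by
  rw [coreInv_def', T.vinv_hcomp _ _ (coreInv_cC hD), Gpd.inv_id]

theorem coreInv_C_top {D : T.B} (hD : T.isCoreD D) :
    T.gBv.s (T.gBh.comp (T.gBv.id (T.gH.inv (T.gBv.s D))) D) = T.gH.id (T.rt D) := by
  rw [T.t_hcomp _ _ (coreInv_cC hD), T.gBv.s_id, T.gH.inv_comp, core_tes hD]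

theorem coreInv_core {D : T.B} (hD : T.isCoreD D) :
    T.isCoreD (T.coreInv D) ∧ T.rt (T.coreInv D) = T.lt D ∧
      T.lt (T.coreInv D) = T.rt D := by
  have hleft : T.gBh.s (T.coreInv D) = T.gV.id (T.rt D) := by
    rw [coreInv_def', T.l_vinv, T.gBh.s_comp _ _ (coreInv_cC hD), T.l_idv,
      T.gH.s_inv, core_tes hD, Gpd.inv_id]
  have hbot : T.gBv.e (T.coreInv D) = T.gH.id (T.rt D) := by
    rw [coreInv_def', T.gBv.e_inv]; exact coreInv_C_top hD
  have hright : T.gBh.e (T.coreInv D) = T.gV.inv (T.gBh.e D) := by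
    rw [coreInv_def', T.r_vinv, T.gBh.e_comp _ _ (coreInv_cC hD)]
  refine ⟨⟨?_, ?_⟩, ?_, ?_⟩
  · show T.gBh.s (T.coreInv D) = T.gV.id (T.gV.s (T.gBh.s (T.coreInv D)))
    rw [hleft, T.gV.s_id]
  · show T.gBv.e (T.coreInv D) = T.gH.id (T.gH.s (T.gBv.e (T.coreInv D)))
    rw [hbot, T.gH.s_id]
  · show T.gV.s (T.gBh.e (T.coreInv D)) = T.lt D
    rw [hright, T.gV.s_inv, core_re hD]
  · show T.gV.s (T.gBh.s (T.coreInv D)) = T.gV.s (T.gBh.e D)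
    rw [hleft, T.gV.s_id]; rfl

theorem coreInv_diamond_left {D : T.B} (hD : T.isCoreD D) :
    T.diamond (T.coreInv D) D = T.thetaBox (T.lt D) := by
  have c1 : T.gBh.e (T.gBv.id (T.gBv.s D)) =
      T.gBh.s (T.gBv.id (T.gH.inv (T.gBv.s D))) := by
    rw [T.r_idv, T.l_idv, T.gH.s_inv]
  have c2 : T.gBh.e (T.gBv.id (T.gH.inv (T.gBv.s D))) = T.gBh.s (T.gBv.inv D) := by
    rw [T.r_idv, T.gH.e_inv, core_tls hD, T.l_vinv, core_left hD, Gpd.inv_id]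
  have hsD' : T.gBh.s (T.gBv.inv D) = T.gV.id (T.lt D) := by
    rw [T.l_vinv, core_left hD, Gpd.inv_id]
  have htop : T.gBh.comp (T.gBv.id (T.gBv.s D)) (T.coreInv D) = T.gBv.inv D := by
    rw [coreInv_split hD, ← T.gBh.comp_assoc _ _ _ c1 c2,
      T.idv_hcomp _ _ (T.gH.s_inv _).symm, T.gH.comp_inv, core_tls hD,
      ← T.id_id, ← hsD', T.gBh.id_comp]
  rw [diamond_def, T.gBh.comp_id, htop, T.gBv.inv_comp, core_bot hD, ← theta_def]

theorem coreInv_diamond_right {D : T.B} (hD : T.isCoreD D) :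
    T.diamond D (T.coreInv D) = T.thetaBox (T.rt D) := by
  have hEtop : T.gBv.s (T.coreInv D) = T.gH.inv (T.gBv.s D) := by
    rw [coreInv_def', T.gBv.s_inv, T.b_hcomp _ _ (coreInv_cC hD), T.gBv.e_id,
      core_bot hD, ← core_tls hD, ← T.gH.e_inv, T.gH.comp_id]
  have hbrow : T.gBh.comp (T.coreInv D) (T.gBh.id (T.gBh.e (T.coreInv D))) =
      T.coreInv D := T.gBh.comp_id _
  rw [diamond_def, hEtop, hbrow, coreInv_def', T.gBv.comp_inv, coreInv_C_top hD,
    ← theta_def]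

end Core

end DoubleGroupoid

/-- the set `D` of boxes with identity left and bottom sides forms a
groupoid over `P`, with source `rt`, target `lt`, identities `Θ_P`, composition `◇`
(defined when `e(D) = s(L)`, i.e. `lt D = rt L`), and inverse `D ↦ ((id^v t D)⁻¹ D)ᵛ`. -/
theorem stmt6 (T : DoubleGroupoid) :
    (∀ p : T.P, T.isCoreD (T.thetaBox p) ∧
      T.rt (T.thetaBox p) = p ∧ T.lt (T.thetaBox p) = p) ∧
    (∀ D L : T.B, T.isCoreD D → T.isCoreD L → T.lt D = T.rt L →
      T.isCoreD (T.diamond D L) ∧ T.rt (T.diamond D L) = T.rt D ∧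
        T.lt (T.diamond D L) = T.lt L) ∧
    (∀ D : T.B, T.isCoreD D → T.diamond (T.thetaBox (T.rt D)) D = D) ∧
    (∀ D : T.B, T.isCoreD D → T.diamond D (T.thetaBox (T.lt D)) = D) ∧
    (∀ D L M : T.B, T.isCoreD D → T.isCoreD L → T.isCoreD M →
      T.lt D = T.rt L → T.lt L = T.rt M →
      T.diamond (T.diamond D L) M = T.diamond D (T.diamond L M)) ∧
    (∀ D : T.B, T.isCoreD D →
      T.isCoreD (T.coreInv D) ∧ T.rt (T.coreInv D) = T.lt D ∧
      T.lt (T.coreInv D) = T.rt D ∧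
      T.diamond (T.coreInv D) D = T.thetaBox (T.lt D) ∧
      T.diamond D (T.coreInv D) = T.thetaBox (T.rt D)) := by
  refine ⟨?_, ?_, ?_, ?_, ?_, ?_⟩
  · exact fun p => ⟨T.theta_core p, T.theta_rt p, T.theta_lt p⟩
  · exact fun D L hD hL h => DoubleGroupoid.diamond_closure hD hL h
  · exact fun D hD => DoubleGroupoid.diamond_theta_left hD
  · exact fun D hD => DoubleGroupoid.diamond_theta_right hD
  · exact fun D L M hD hL hM h1 h2 => DoubleGroupoid.diamond_assoc hD hL hM h1 h2
  · exact fun D hD => ⟨(DoubleGroupoid.coreInv_core hD).1,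
      (DoubleGroupoid.coreInv_core hD).2.1, (DoubleGroupoid.coreInv_core hD).2.2,
      DoubleGroupoid.coreInv_diamond_left hD, DoubleGroupoid.coreInv_diamond_right hD⟩
end
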